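/- arXiv:1310.8425 — 5 statements merged into one kernel-verified Lean document; each statement's English description precedes it below -/
import Mathlib

section
/- Let A be a d×d integer dilation matrix (all eigenvalues greater than 1 in absolute value). Let S(A) ⊂ [0,1)^d be a set such that A·S(A) is a complete set of representatives of ℤ^d/Aℤ^d containing 0. Then the sets A^j(k + s), for j ≥ 1, s ∈ S(A)\{0}, k ∈ ℤ^d, form a partition of ℤ^d\{0}: their union over all j ∈ ℕ, s ∈ S(A)\{0} equals ℤ^d\{0}, and the sets A^j{k+s : k ∈ ℤ^d} and A^{j'}{k+s' : k ∈ ℤ^d} are disjoint whenever j ≠ j' or s ≠ s'. -/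
/-!
All eigenvalues of `A⁻¹` lie in the open unit disc, so `A⁻ⁿ → 0` by Gelfand's formula, and a
nonzero integer vector `x` lies in `Aⁿ ℤ^d` for only finitely many `n`. For the largest such `n`
write `x = Aⁿ y`; with `A s` the representative of the class of `y` modulo `A ℤ^d` we get
`y = A (m + s)`, and `s ≠ 0` by maximality of `n`, so `x = A^(n+1) (m + s)`.

Conversely `A^j (ℤ^d + s) ⊆ ℤ^d` for `j ≥ 1`. If `A^j (k + s) = A^(j+t) (k' + s')`, then
`k + s = A^t (k' + s')`: for `t ≥ 1` the right side is integral, so `s ∈ ℤ^d ∩ [0,1)^d = {0}`;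
for `t = 0`, `s ≡ s'` modulo `ℤ^d` and both lie in `[0,1)^d`, so `s = s'`.
-/

open Matrix Filter Topology

theorem tendsto_pow_atTop_nhds_zero_of_forall_spectrum_norm_lt_one
    {A : Type*} [NormedRing A] [NormedAlgebra ℂ A] [CompleteSpace A] {a : A}
    (ha : ∀ z ∈ spectrum ℂ a, ‖z‖ < 1) : Tendsto (a ^ ·) atTop (𝓝 0) := by
  cases subsingleton_or_nontrivial A
  · simp [Subsingleton.elim _ (0 : A)]
  obtain ⟨ρ, hρa, hρ1⟩ := ENNReal.lt_iff_exists_nnreal_btwn.1 <|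
    spectrum.spectralRadius_lt_of_forall_lt a (r := 1) fun z hz => by
      simpa [← NNReal.coe_lt_coe] using ha z hz
  have hρ : ∀ᶠ n : ℕ in atTop, ‖a ^ n‖₊ ≤ ρ ^ n := by
    filter_upwards [(spectrum.pow_nnnorm_pow_one_div_tendsto_nhds_spectralRadius a)
      |>.eventually_lt_const hρa, eventually_ne_atTop 0] with n hn hn0
    have := ENNReal.rpow_le_rpow hn.le (Nat.cast_nonneg n : (0 : ℝ) ≤ n)
    rw [← ENNReal.rpow_mul, one_div, inv_mul_cancel₀ (by exact_mod_cast hn0), ENNReal.rpow_one,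
      ENNReal.rpow_natCast] at this
    exact_mod_cast this
  refine squeeze_zero_norm' ?_
    (tendsto_pow_atTop_nhds_zero_of_lt_one ρ.coe_nonneg (by exact_mod_cast hρ1))
  filter_upwards [hρ] with n hn
  exact_mod_cast hn

namespace Matrix

variable {ι : Type*} [Fintype ι] [DecidableEq ι]

def IsExpanding (M : Matrix ι ι ℂ) : Prop :=
  ∀ μ ∈ M.charpoly.roots, 1 < ‖μ‖

namespace IsExpanding

variable {M : Matrix ι ι ℂ}

theorem one_lt_norm_of_mem_spectrum (hM : M.IsExpanding) {μ : ℂ} (h : μ ∈ spectrum ℂ M) :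
    1 < ‖μ‖ :=
  hM μ <| (Polynomial.mem_roots M.charpoly_monic.ne_zero).2 (mem_spectrum_iff_isRoot_charpoly.1 h)

theorem isUnit (hM : M.IsExpanding) : IsUnit M :=
  (spectrum.zero_notMem_iff ℂ).1 fun h => absurd (hM.one_lt_norm_of_mem_spectrum h) (by simp)

attribute [local instance] Matrix.linftyOpNormedRing Matrix.linftyOpNormedAlgebra in
theorem tendsto_inv_pow_mulVec (hM : M.IsExpanding) (v : ι → ℂ) :
    Tendsto (fun n : ℕ => M⁻¹ ^ n *ᵥ v) atTop (𝓝 0) := by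
  have hspec : ∀ z ∈ spectrum ℂ M⁻¹, ‖z‖ < 1 := by
    intro z hz
    rw [← hM.isUnit.unit_spec, ← coe_units_inv, ← spectrum.inv₀_mem_iff] at hz
    exact (one_lt_inv_iff₀.1 (by simpa using hM.one_lt_norm_of_mem_spectrum hz)).2
  simpa [Function.comp_def] using ((continuous_id.matrix_mulVec continuous_const).tendsto 0).comp
    (tendsto_pow_atTop_nhds_zero_of_forall_spectrum_norm_lt_one hspec)

end IsExpanding

theorem isUnit_of_isExpanding_map {A : Matrix ι ι ℝ} (hA : (A.map Complex.ofReal).IsExpanding) :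
    IsUnit A := by
  have hdet : (A.map Complex.ofReal).det = (A.det : ℂ) := (RingHom.map_det Complex.ofRealHom A).symm
  have := (isUnit_iff_isUnit_det _).1 hA.isUnit
  rw [hdet, isUnit_iff_ne_zero, Complex.ofReal_ne_zero, ← isUnit_iff_ne_zero] at this
  exact (isUnit_iff_isUnit_det A).2 this

end Matrix

section IntLattice

variable {ι : Type*}

def intLattice (ι : Type*) : AddSubgroup (ι → ℝ) where
  carrier := {x | ∀ i, ∃ z : ℤ, x i = z}
  add_mem' hx hy i := by
    obtain ⟨a, ha⟩ := hx i
    obtain ⟨b, hb⟩ := hy i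
    exact ⟨a + b, by simp [ha, hb]⟩
  zero_mem' _ := ⟨0, by simp⟩
  neg_mem' hx i := by
    obtain ⟨a, ha⟩ := hx i
    exact ⟨-a, by simp [ha]⟩

theorem mem_intLattice_iff_exists {x : ι → ℝ} :
    x ∈ intLattice ι ↔ ∃ k : ι → ℤ, x = fun i => (k i : ℝ) := by
  refine ⟨fun h => ?_, ?_⟩
  · choose k hk using h
    exact ⟨k, funext hk⟩
  · rintro ⟨k, rfl⟩ i
    exact ⟨k i, rfl⟩

theorem exists_intCast_add_eq_iff {x s : ι → ℝ} :
    (∃ k : ι → ℤ, x = (fun i => (k i : ℝ)) + s) ↔ x - s ∈ intLattice ι := by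
  simp [mem_intLattice_iff_exists, sub_eq_iff_eq_add]

theorem exists_ne_zero_intCast_eq_iff {x : ι → ℝ} :
    (∃ k : ι → ℤ, k ≠ 0 ∧ x = fun i => (k i : ℝ)) ↔ x ∈ intLattice ι ∧ x ≠ 0 := by
  rw [mem_intLattice_iff_exists]
  constructor
  · rintro ⟨k, hk, rfl⟩
    exact ⟨⟨k, rfl⟩, fun h => hk (funext fun i => by simpa using congrFun h i)⟩
  · rintro ⟨⟨k, rfl⟩, hx0⟩
    exact ⟨k, fun hk => hx0 (by simp [hk]; rfl), rfl⟩

theorem eq_zero_of_mem_intLattice_of_abs_lt_one {x : ι → ℝ} (hx : x ∈ intLattice ι)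
    (h : ∀ i, |x i| < 1) : x = 0 := by
  funext i
  obtain ⟨z, hz⟩ := hx i
  have : |z| < 1 := by exact_mod_cast hz ▸ h i
  simp [hz, Int.abs_lt_one_iff.1 this]

theorem mulVec_mem_intLattice [Fintype ι] {A : Matrix ι ι ℝ} (hA : ∀ i j, ∃ z : ℤ, A i j = z)
    {x : ι → ℝ} (hx : x ∈ intLattice ι) : A *ᵥ x ∈ intLattice ι := by
  choose a ha using hA
  choose k hk using hx
  exact fun i => ⟨∑ j, a i j * k j, by simp [mulVec, dotProduct, ha, hk]⟩

theorem pow_mulVec_mem_intLattice [Fintype ι] [DecidableEq ι] {A : Matrix ι ι ℝ}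
    (hA : ∀ i j, ∃ z : ℤ, A i j = z) {x : ι → ℝ} (hx : x ∈ intLattice ι) (n : ℕ) :
    A ^ n *ᵥ x ∈ intLattice ι := by
  induction n with
  | zero => simpa using hx
  | succ n ih => simpa [pow_succ', ← mulVec_mulVec] using mulVec_mem_intLattice hA ih

theorem eq_of_sub_mem_intLattice {s s' : ι → ℝ} (hs : ∀ i, 0 ≤ s i ∧ s i < 1)
    (hs' : ∀ i, 0 ≤ s' i ∧ s' i < 1) (h : s - s' ∈ intLattice ι) : s = s' :=
  sub_eq_zero.1 <| eq_zero_of_mem_intLattice_of_abs_lt_one h fun i =>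
    abs_sub_lt_iff.2 ⟨by linarith [hs i, hs' i], by linarith [hs i, hs' i]⟩

theorem eq_zero_of_mem_intLattice {s : ι → ℝ} (hs : ∀ i, 0 ≤ s i ∧ s i < 1)
    (h : s ∈ intLattice ι) : s = 0 :=
  eq_of_sub_mem_intLattice hs (fun _ => ⟨le_rfl, one_pos⟩) (by simpa using h)

end IntLattice

section Tiling

variable {ι : Type*} [Fintype ι] [DecidableEq ι] {A : Matrix ι ι ℝ}

theorem eventually_notMem_image_pow_mulVec_intLattice (hA : (A.map Complex.ofReal).IsExpanding)
    {x : ι → ℝ} (hx : x ≠ 0) : ∀ᶠ n in atTop, x ∉ (A ^ n).mulVec '' intLattice ι := by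
  set M := A.map Complex.ofReal
  filter_upwards [(hA.tendsto_inv_pow_mulVec fun i => (x i : ℂ)).eventually
    (Metric.ball_mem_nhds 0 one_pos)] with n hn
  rintro ⟨y, hy, rfl⟩
  have hpow : M ^ n = (A ^ n).map Complex.ofRealHom :=
    (map_pow Complex.ofRealHom.mapMatrix A n).symm
  have hmap : (fun i => ((A ^ n *ᵥ y) i : ℂ)) = M ^ n *ᵥ fun i => (y i : ℂ) := by
    ext i
    rw [hpow]
    exact RingHom.map_mulVec Complex.ofRealHom (A ^ n) y i
  have hinv : M⁻¹ ^ n * M ^ n = 1 := by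
    rw [inv_pow', nonsing_inv_mul _ ((isUnit_iff_isUnit_det _).1 (hA.isUnit.pow n))]
  rw [dist_zero_right, hmap, mulVec_mulVec, hinv, one_mulVec] at hn
  have hy0 : y = 0 := eq_zero_of_mem_intLattice_of_abs_lt_one hy fun i => by
    simpa using (norm_le_pi_norm (fun i => (y i : ℂ)) i).trans_lt hn
  exact hx (by rw [hy0, mulVec_zero])

theorem pow_mulVec_mem_intLattice_of_sub_mem (hA : ∀ i j, ∃ z : ℤ, A i j = z) {s y : ι → ℝ}
    (hAs : A *ᵥ s ∈ intLattice ι) (hy : y - s ∈ intLattice ι) {j : ℕ} (hj : 1 ≤ j) :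
    A ^ j *ᵥ y ∈ intLattice ι := by
  obtain ⟨n, rfl⟩ := Nat.exists_eq_add_of_le' hj
  rw [pow_succ, ← mulVec_mulVec]
  refine pow_mulVec_mem_intLattice hA ?_ n
  simpa [mulVec_sub] using add_mem (mulVec_mem_intLattice hA hy) hAs

theorem eq_and_eq_of_pow_mulVec_eq (hA : ∀ i j, ∃ z : ℤ, A i j = z) (hAu : IsUnit A)
    {s s' y y' : ι → ℝ} (hs : ∀ i, 0 ≤ s i ∧ s i < 1) (hs' : ∀ i, 0 ≤ s' i ∧ s' i < 1)
    (hAs : A *ᵥ s ∈ intLattice ι) (hAs' : A *ᵥ s' ∈ intLattice ι) (hs0 : s ≠ 0) (hs0' : s' ≠ 0)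
    (hy : y - s ∈ intLattice ι) (hy' : y' - s' ∈ intLattice ι) {j j' : ℕ}
    (h : A ^ j *ᵥ y = A ^ j' *ᵥ y') : j = j' ∧ s = s' := by
  wlog hjj' : j ≤ j' generalizing j j' s s' y y'
  · obtain ⟨h₁, h₂⟩ := this hs' hs hAs' hAs hs0' hs0 hy' hy h.symm (le_of_not_ge hjj')
    exact ⟨h₁.symm, h₂.symm⟩
  obtain ⟨t, rfl⟩ := Nat.exists_eq_add_of_le hjj'
  rw [pow_add, ← mulVec_mulVec] at h
  have hyt : y = A ^ t *ᵥ y' := mulVec_injective_iff_isUnit.2 (hAu.pow j) h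
  rcases Nat.eq_zero_or_pos t with rfl | ht
  · rw [pow_zero, one_mulVec] at hyt
    subst hyt
    refine ⟨rfl, eq_of_sub_mem_intLattice hs hs' ?_⟩
    simpa using sub_mem hy' hy
  · refine absurd (eq_zero_of_mem_intLattice hs ?_) hs0
    rw [← sub_sub_cancel y s]
    exact sub_mem (hyt ▸ pow_mulVec_mem_intLattice_of_sub_mem hA hAs' hy' ht) hy

theorem exists_pow_mulVec_eq_of_mem_intLattice (hA : (A.map Complex.ofReal).IsExpanding)
    {S : Set (ι → ℝ)} (hrep : ∀ y ∈ intLattice ι, ∃ s ∈ S, ∃ m ∈ intLattice ι, y = A *ᵥ s + A *ᵥ m)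
    {x : ι → ℝ} (hx : x ∈ intLattice ι) (hx0 : x ≠ 0) :
    ∃ j, 1 ≤ j ∧ ∃ s ∈ S, s ≠ 0 ∧ ∃ y, y - s ∈ intLattice ι ∧ A ^ j *ᵥ y = x := by
  obtain ⟨n, ⟨y, hy, rfl⟩, hn⟩ :
      ∃ n, x ∈ (A ^ n).mulVec '' intLattice ι ∧ x ∉ (A ^ (n + 1)).mulVec '' intLattice ι := by
    by_contra! h
    obtain ⟨N, hN⟩ := (eventually_notMem_image_pow_mulVec_intLattice hA hx0).exists
    exact hN (Nat.rec ⟨x, hx, by simp⟩ h N)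
  obtain ⟨s, hs, m, hm, rfl⟩ := hrep y hy
  refine ⟨n + 1, le_add_self, s, hs, ?_, m + s, by simpa using hm, ?_⟩
  · rintro rfl
    exact hn ⟨m, hm, by simp [pow_succ, mulVec_mulVec]⟩
  · simp [pow_succ, ← mulVec_mulVec, mulVec_add, add_comm]

end Tiling

theorem dilation_matrix_coset_partition_general
    (d : ℕ) (A : Matrix (Fin d) (Fin d) ℝ)
    (hint : ∀ i j, ∃ z : ℤ, A i j = (z : ℝ))
    (heig : ∀ μ ∈ (A.map Complex.ofReal).charpoly.roots, 1 < ‖μ‖)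
    (S : Finset (Fin d → ℝ))
    (hS01 : ∀ s ∈ S, ∀ i, 0 ≤ s i ∧ s i < 1)
    (hSZ : ∀ s ∈ S, ∀ i, ∃ z : ℤ, A.mulVec s i = (z : ℝ))
    (hrep : ∀ k : Fin d → ℤ, ∃! s : Fin d → ℝ, s ∈ S ∧ ∃ m : Fin d → ℤ,
        (fun i => (k i : ℝ)) = A.mulVec s + A.mulVec (fun i => (m i : ℝ))) :
    (⋃ j : ℕ, ⋃ (_ : 1 ≤ j), ⋃ s ∈ S, ⋃ (_ : s ≠ 0),
        (A ^ j).mulVec '' {x : Fin d → ℝ | ∃ k : Fin d → ℤ, x = (fun i => (k i : ℝ)) + s})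
      = {x : Fin d → ℝ | ∃ k : Fin d → ℤ, k ≠ 0 ∧ x = fun i => (k i : ℝ)} ∧
    (∀ j j' : ℕ, 1 ≤ j → 1 ≤ j' → ∀ s ∈ S, s ≠ 0 → ∀ s' ∈ S, s' ≠ 0 →
      (j ≠ j' ∨ s ≠ s') →
      Disjoint
        ((A ^ j).mulVec '' {x : Fin d → ℝ | ∃ k : Fin d → ℤ, x = (fun i => (k i : ℝ)) + s})
        ((A ^ j').mulVec '' {x : Fin d → ℝ | ∃ k : Fin d → ℤ, x = (fun i => (k i : ℝ)) + s'})) := by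
  have hAu : IsUnit A := isUnit_of_isExpanding_map heig
  have hrep' : ∀ y ∈ intLattice (Fin d), ∃ s ∈ (S : Set (Fin d → ℝ)), ∃ m ∈ intLattice (Fin d),
      y = A *ᵥ s + A *ᵥ m := by
    intro y hy
    obtain ⟨k, rfl⟩ := mem_intLattice_iff_exists.1 hy
    obtain ⟨s, ⟨hs, m, hm⟩, -⟩ := hrep k
    exact ⟨s, hs, _, mem_intLattice_iff_exists.2 ⟨m, rfl⟩, hm⟩
  simp only [exists_intCast_add_eq_iff, exists_ne_zero_intCast_eq_iff]
  refine ⟨Set.ext fun x => ⟨?_, fun ⟨hx, hx0⟩ => ?_⟩, ?_⟩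
  · simp only [Set.mem_iUnion]
    rintro ⟨j, hj, s, hs, hs0, y, hy, rfl⟩
    refine ⟨pow_mulVec_mem_intLattice_of_sub_mem hint (hSZ s hs) hy hj, fun h => hs0 ?_⟩
    have hy0 : y = 0 := mulVec_injective_iff_isUnit.2 (hAu.pow j) (by simpa using h)
    exact eq_zero_of_mem_intLattice (hS01 s hs) (by simpa [hy0] using hy)
  · obtain ⟨j, hj, s, hs, hs0, y, hy, rfl⟩ :=
      exists_pow_mulVec_eq_of_mem_intLattice heig hrep' hx hx0
    simp only [Set.mem_iUnion]
    exact ⟨j, hj, s, hs, hs0, y, hy, rfl⟩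
  · rintro j j' - - s hs hs0 s' hs' hs0' hne
    refine Set.disjoint_left.2 ?_
    rintro _ ⟨y, hy, rfl⟩ ⟨y', hy', h⟩
    obtain ⟨rfl, rfl⟩ := eq_and_eq_of_pow_mulVec_eq hint hAu (hS01 s hs) (hS01 s' hs')
      (hSZ s hs) (hSZ s' hs') hs0 hs0' hy hy' h.symm
    simp at hne

/-- Let `A` be a `d×d` integer dilation matrix (all complex eigenvalues
greater than `1` in absolute value) and let `S(A) ⊂ [0,1)^d` be such that `A·S(A) ⊆ ℤ^d`
is a complete set of representatives of `ℤ^d/Aℤ^d` containing `0`. Then the sets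
`A^j(ℤ^d + s)`, `j ≥ 1`, `s ∈ S(A)\{0}`, form a partition of `ℤ^d\{0}`: their union is
`ℤ^d\{0}` and they are pairwise disjoint. -/
theorem dilation_matrix_coset_partition
    (d : ℕ) (A : Matrix (Fin d) (Fin d) ℝ)
    (hint : ∀ i j, ∃ z : ℤ, A i j = (z : ℝ))
    (heig : ∀ μ ∈ (A.map Complex.ofReal).charpoly.roots, 1 < ‖μ‖)
    (S : Finset (Fin d → ℝ))
    (hS01 : ∀ s ∈ S, ∀ i, 0 ≤ s i ∧ s i < 1)
    (hSZ : ∀ s ∈ S, ∀ i, ∃ z : ℤ, A.mulVec s i = (z : ℝ))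
    (h0 : (0 : Fin d → ℝ) ∈ S)
    (hrep : ∀ k : Fin d → ℤ, ∃! s : Fin d → ℝ, s ∈ S ∧ ∃ m : Fin d → ℤ,
        (fun i => (k i : ℝ)) = A.mulVec s + A.mulVec (fun i => (m i : ℝ))) :
    (⋃ j : ℕ, ⋃ (_ : 1 ≤ j), ⋃ s ∈ S, ⋃ (_ : s ≠ 0),
        (A ^ j).mulVec '' {x : Fin d → ℝ | ∃ k : Fin d → ℤ, x = (fun i => (k i : ℝ)) + s})
      = {x : Fin d → ℝ | ∃ k : Fin d → ℤ, k ≠ 0 ∧ x = fun i => (k i : ℝ)} ∧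
    (∀ j j' : ℕ, 1 ≤ j → 1 ≤ j' → ∀ s ∈ S, s ≠ 0 → ∀ s' ∈ S, s' ≠ 0 →
      (j ≠ j' ∨ s ≠ s') →
      Disjoint
        ((A ^ j).mulVec '' {x : Fin d → ℝ | ∃ k : Fin d → ℤ, x = (fun i => (k i : ℝ)) + s})
        ((A ^ j').mulVec '' {x : Fin d → ℝ | ∃ k : Fin d → ℤ, x = (fun i => (k i : ℝ)) + s'})) :=
  dilation_matrix_coset_partition_general d A hint heig S hS01 hSZ hrep
end

section
/- Let Q² = [q_{ij}] be a real symmetric positive definite d×d matrix, and define the trigonometric polynomial G(ξ₁,…,ξ_d) := 4 Σ_{i=1}^d q_{ii} sin²(ξ_i/2) + 2 Σ_{1≤i<j≤d} q_{ij} sin ξ_i sin ξ_j. Then G(ξ) ≥ 0 for all ξ ∈ ℝ^d, and G(ξ) = 0 if and only if ξ ∈ 2πℤ^d. -/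
open Matrix

/-!
Since `sin² ξ = 4 sin²(ξ/2) - 4 sin⁴(ξ/2)`, the diagonal part of the quadratic form
`⟨Q² s, s⟩` at `s = (sin ξ_i)_i` differs from `4 Σ q_ii sin²(ξ_i/2)` by `4 Σ q_ii sin⁴(ξ_i/2)`,
so `G(ξ) = ⟨Q² s, s⟩ + 4 Σ q_ii sin⁴(ξ_i/2)`. Both terms are nonnegative, and as `q_ii > 0` the
second one vanishes exactly when every `sin(ξ_i/2)` does, i.e. when `ξ ∈ 2πℤ^d`; then also `s = 0`.
-/

open Real

theorem Finset.sum_sum_eq_sum_diag_add_two_mul_sum_lt {ι R : Type*} [Fintype ι] [LinearOrder ι]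
    [NonAssocSemiring R] (f : ι → ι → R) (hf : ∀ i j, f j i = f i j) :
    ∑ i, ∑ j, f i j = ∑ i, f i i + 2 * ∑ i, ∑ j, if i < j then f i j else 0 := by
  have hsplit : ∀ i j, f i j =
      ((if i < j then f i j else 0) + if j < i then f j i else 0) + if i = j then f i j else 0 := by
    intro i j
    rcases lt_trichotomy i j with h | rfl | h
    · simp [h, h.not_gt, h.ne]
    · simp
    · simp [h, h.not_gt, h.ne', hf]
  simp_rw [sum_congr rfl fun i _ => sum_congr rfl fun j _ => hsplit i j, sum_add_distrib,
    sum_ite_eq, mem_univ, if_true, two_mul]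
  rw [sum_comm (f := fun i j => if j < i then f j i else 0), add_comm (∑ i, f i i)]

theorem Real.sin_sq_eq_four_mul_sin_half_sq_sub (x : ℝ) :
    sin x ^ 2 = 4 * sin (x / 2) ^ 2 - 4 * sin (x / 2) ^ 4 := by
  have hsin : sin x = 2 * sin (x / 2) * cos (x / 2) := by
    rw [← sin_two_mul, mul_div_cancel₀ x two_ne_zero]
  rw [hsin]
  linear_combination (4 * sin (x / 2) ^ 2) * sin_sq_add_cos_sq (x / 2)

theorem Real.sin_half_eq_zero_iff {x : ℝ} : sin (x / 2) = 0 ↔ ∃ k : ℤ, x = 2 * π * k := by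
  rw [sin_eq_zero_iff]
  refine exists_congr fun k => ?_
  constructor <;> intro h <;> linarith

variable {ι : Type*} [Fintype ι] [LinearOrder ι]

/-- The paper's `G`, with `q` in the role of `Q²`. -/
noncomputable def trigPoly (q : Matrix ι ι ℝ) (ξ : ι → ℝ) : ℝ :=
  4 * ∑ i, q i i * sin (ξ i / 2) ^ 2 +
    2 * ∑ i, ∑ j, if i < j then q i j * sin (ξ i) * sin (ξ j) else 0

theorem trigPoly_eq_dotProduct_mulVec_add {q : Matrix ι ι ℝ} (hq : q.IsSymm) (ξ : ι → ℝ) :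
    trigPoly q ξ = (fun i => sin (ξ i)) ⬝ᵥ q *ᵥ (fun i => sin (ξ i)) +
      4 * ∑ i, q i i * sin (ξ i / 2) ^ 4 := by
  have hquad : (fun i => sin (ξ i)) ⬝ᵥ q *ᵥ (fun i => sin (ξ i)) =
      ∑ i, ∑ j, q i j * sin (ξ i) * sin (ξ j) := by
    simp only [dotProduct, mulVec, Finset.mul_sum]
    exact Finset.sum_congr rfl fun i _ => Finset.sum_congr rfl fun j _ => by ring
  rw [hquad,
    Finset.sum_sum_eq_sum_diag_add_two_mul_sum_lt _ fun i j => by rw [hq.apply i j]; ring]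
  have hdiag : ∑ i, q i i * sin (ξ i) * sin (ξ i) =
      4 * ∑ i, q i i * sin (ξ i / 2) ^ 2 - 4 * ∑ i, q i i * sin (ξ i / 2) ^ 4 := by
    rw [Finset.mul_sum, Finset.mul_sum, ← Finset.sum_sub_distrib]
    refine Finset.sum_congr rfl fun i _ => ?_
    rw [mul_assoc, ← pow_two, sin_sq_eq_four_mul_sin_half_sq_sub]
    ring
  rw [hdiag, trigPoly]
  ring

theorem trigPoly_nonneg {q : Matrix ι ι ℝ} (hq : q.PosSemidef) (ξ : ι → ℝ) : 0 ≤ trigPoly q ξ := by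
  rw [trigPoly_eq_dotProduct_mulVec_add (isHermitian_iff_isSymm.mp hq.isHermitian)]
  have hquad := hq.dotProduct_mulVec_nonneg fun i => sin (ξ i)
  rw [star_trivial] at hquad
  have hquartic : 0 ≤ ∑ i, q i i * sin (ξ i / 2) ^ 4 :=
    Finset.sum_nonneg fun i _ => mul_nonneg hq.diag_nonneg (by positivity)
  linarith

theorem trigPoly_eq_zero_iff {q : Matrix ι ι ℝ} (hq : q.PosDef) (ξ : ι → ℝ) :
    trigPoly q ξ = 0 ↔ ∃ k : ι → ℤ, ∀ i, ξ i = 2 * π * k i := by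
  have hquad := hq.posSemidef.dotProduct_mulVec_nonneg fun i => sin (ξ i)
  rw [star_trivial] at hquad
  have hterm_nonneg : ∀ i ∈ Finset.univ, 0 ≤ q i i * sin (ξ i / 2) ^ 4 :=
    fun i _ => mul_nonneg hq.diag_pos.le (by positivity)
  have hquartic : ∑ i, q i i * sin (ξ i / 2) ^ 4 = 0 ↔ ∀ i, sin (ξ i / 2) = 0 := by
    simp [Finset.sum_eq_zero_iff_of_nonneg hterm_nonneg, hq.diag_pos.ne']
  rw [trigPoly_eq_dotProduct_mulVec_add (isHermitian_iff_isSymm.mp hq.isHermitian),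
    add_eq_zero_iff_of_nonneg hquad (mul_nonneg zero_le_four (Finset.sum_nonneg hterm_nonneg)),
    mul_eq_zero, or_iff_right four_ne_zero, hquartic]
  refine (and_iff_right_of_imp fun hhalf => ?_).trans ?_
  · have hsin : (fun i => sin (ξ i)) = 0 := funext fun i => by
      simpa [hhalf i] using sin_sq_eq_four_mul_sin_half_sq_sub (ξ i)
    simp [hsin]
  · simp_rw [sin_half_eq_zero_iff, Classical.skolem]

theorem trig_polynomial_nonneg_and_zeros_general
    (d : ℕ) (q : Matrix (Fin d) (Fin d) ℝ) (hpd : q.PosDef) :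
    let G : (Fin d → ℝ) → ℝ := fun ξ =>
      4 * ∑ i, q i i * Real.sin (ξ i / 2) ^ 2 +
      2 * ∑ i, ∑ j, if i < j then q i j * Real.sin (ξ i) * Real.sin (ξ j) else 0
    (∀ ξ : Fin d → ℝ, 0 ≤ G ξ) ∧
    (∀ ξ : Fin d → ℝ, G ξ = 0 ↔ ∃ k : Fin d → ℤ, ∀ i, ξ i = 2 * Real.pi * k i) :=
  ⟨trigPoly_nonneg hpd.posSemidef, trigPoly_eq_zero_iff hpd⟩

/-- Let `Q² = [q_{ij}]` be a real symmetric positive definite matrix and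
`G(ξ) := 4 Σ_i q_{ii} sin²(ξ_i/2) + 2 Σ_{i<j} q_{ij} sin ξ_i sin ξ_j`. Then `G(ξ) ≥ 0`
for all `ξ ∈ ℝ^d`, and `G(ξ) = 0` if and only if `ξ ∈ 2πℤ^d`. -/
theorem trig_polynomial_nonneg_and_zeros
    (d : ℕ) (q : Matrix (Fin d) (Fin d) ℝ) (hsymm : qᵀ = q) (hpd : q.PosDef) :
    let G : (Fin d → ℝ) → ℝ := fun ξ =>
      4 * ∑ i, q i i * Real.sin (ξ i / 2) ^ 2 +
      2 * ∑ i, ∑ j, if i < j then q i j * Real.sin (ξ i) * Real.sin (ξ j) else 0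
    (∀ ξ : Fin d → ℝ, 0 ≤ G ξ) ∧
    (∀ ξ : Fin d → ℝ, G ξ = 0 ↔ ∃ k : Fin d → ℤ, ∀ i, ξ i = 2 * Real.pi * k i) :=
  trig_polynomial_nonneg_and_zeros_general d q hpd
end

section
/- Let C_{k₁},…,C_{k₂} ∈ ℝ with C_{k₁} ≠ 0 and 1 ≤ k₁ < k₂, and let W be a nonconstant homogeneous polynomial on ℝ^d. Then a polynomial Q satisfies (Σ_{k=k₁}^{k₂} C_k W(−iD)^k) Q = 0 if and only if W(−iD)^{k₁} Q = 0. In particular, the polynomial null-space of Σ_k C_k W(−iD)^k coincides with that of the lowest-order operator W(−iD)^{k₁} and is affinely invariant. -/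
/-!
Write `A = W(−iD)`. Since `W` is homogeneous of degree `r ≥ 1`, `A` lowers total degree by `r`.
With `P = A^{k₁} Q`, the operator sends `Q` to `C_{k₁} P + ∑_{k > k₁} C_k A^{k - k₁} P`, and every
term of the sum has total degree below that of `P`, so the result vanishes only when `P = 0`. The substitution
`x ↦ λ x + h` intertwines each `∂_j` with `λ ∂_j`, hence `A^{k₁}` with `λ^{r k₁} A^{k₁}`, so it
preserves the kernel of `A^{k₁}`.
-/

open MvPolynomial

/-- The differential operator `D^α = ∂^{α₁}_1 ⋯ ∂^{α_d}_d` on polynomials. -/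
noncomputable def Dmulti {d : ℕ} (α : Fin d →₀ ℕ) :
    Module.End ℂ (MvPolynomial (Fin d) ℂ) :=
  (List.ofFn fun j : Fin d => ((pderiv j :
    Derivation ℂ (MvPolynomial (Fin d) ℂ) (MvPolynomial (Fin d) ℂ)).toLinearMap) ^ (α j)).prod

/-- `P(−iD) Q`: the constant-coefficient differential operator with symbol `P`
applied to the polynomial `Q`. -/
noncomputable def applyOp {d : ℕ} (P Q : MvPolynomial (Fin d) ℂ) : MvPolynomial (Fin d) ℂ :=
  (AddMonoidAlgebra.coeff P).sum fun α c => (c * (-Complex.I) ^ (α.sum fun _ n => n)) • (Dmulti α Q)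

/-- The shifted polynomial `x ↦ Q(x + h)` for a real shift `h ∈ ℝ^d`. -/
noncomputable def shiftPoly {d : ℕ} (Q : MvPolynomial (Fin d) ℂ) (h : Fin d → ℝ) :
    MvPolynomial (Fin d) ℂ :=
  aeval (fun j => X j + C ((h j : ℂ))) Q

/-- The scaled polynomial `x ↦ Q(λ x)` for a real scalar `λ`. -/
noncomputable def scalePoly {d : ℕ} (Q : MvPolynomial (Fin d) ℂ) (lam : ℝ) :
    MvPolynomial (Fin d) ℂ :=
  aeval (fun j => C ((lam : ℂ)) * X j) Q

namespace Module.End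

variable {R M : Type*} [CommSemiring R] [AddCommMonoid M] [Module R M]

/-- Indexed by the exponent of `a`, so that these submodules form a family graded by `ℕ`. -/
def scaledCommutant (φ : Module.End R M) (a : R) (n : ℕ) : Submodule R (Module.End R M) where
  carrier := {f | f * φ = a ^ n • (φ * f)}
  add_mem' {f g} (hf : f * φ = _) (hg : g * φ = _) := by
    change (f + g) * φ = _
    rw [add_mul, hf, hg, mul_add, smul_add]
  zero_mem' := by simp
  smul_mem' c f (hf : f * φ = _) := by
    change (c • f) * φ = _
    rw [smul_mul_assoc, hf, mul_smul_comm, smul_comm]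

instance (φ : Module.End R M) (a : R) : SetLike.GradedMonoid (scaledCommutant φ a) where
  one_mem := by simp [scaledCommutant]
  mul_mem m n f g (hf : f * φ = _) (hg : g * φ = _) := by
    change (f * g) * φ = _
    rw [mul_assoc, hg, mul_smul_comm, ← mul_assoc, hf, smul_mul_assoc, smul_smul, ← pow_add,
      add_comm, mul_assoc]

end Module.End

namespace MvPolynomial

section TotalDegreeLT

variable (σ R : Type*) [CommSemiring R]

noncomputable def totalDegreeLT (n : ℕ) : Submodule R (MvPolynomial σ R) :=
  restrictSupport R {m | m.degree < n}

def lowersTotalDegreeBy (s : ℕ) : Submodule R (Module.End R (MvPolynomial σ R)) where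
  carrier := {f | ∀ n, ∀ p ∈ totalDegreeLT σ R (n + s), f p ∈ totalDegreeLT σ R n}
  add_mem' hf hg n p hp := add_mem (hf n p hp) (hg n p hp)
  zero_mem' _ _ _ := zero_mem _
  smul_mem' c _ hf n p hp := Submodule.smul_mem _ c (hf n p hp)

variable {σ R}

lemma mem_totalDegreeLT {n : ℕ} {p : MvPolynomial σ R} :
    p ∈ totalDegreeLT σ R n ↔ ∀ m ∈ p.support, m.degree < n :=
  Iff.rfl

lemma totalDegreeLT_mono {m n : ℕ} (h : m ≤ n) : totalDegreeLT σ R m ≤ totalDegreeLT σ R n :=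
  restrictSupport_mono R fun _ hk => lt_of_lt_of_le hk h

lemma mem_totalDegreeLT_iff_of_ne_zero {n : ℕ} {p : MvPolynomial σ R} (hp : p ≠ 0) :
    p ∈ totalDegreeLT σ R n ↔ p.totalDegree < n := by
  refine ⟨fun h => ?_, fun h m hm => (le_totalDegree hm).trans_lt h⟩
  obtain ⟨m, hm, hdeg⟩ := Finset.exists_mem_eq_sup p.support (support_nonempty.mpr hp)
    fun m : σ →₀ ℕ => m.degree
  calc p.totalDegree = m.degree := hdeg
    _ < n := mem_totalDegreeLT.mp h m hm

lemma mem_totalDegreeLT_totalDegree_add_one (p : MvPolynomial σ R) :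
    p ∈ totalDegreeLT σ R (p.totalDegree + 1) :=
  fun _ hm => Nat.lt_succ_of_le (le_totalDegree hm)

lemma lowersTotalDegreeBy_antitone {s t : ℕ} (h : t ≤ s) :
    lowersTotalDegreeBy σ R s ≤ lowersTotalDegreeBy σ R t :=
  fun _ hf n p hp => hf n p (totalDegreeLT_mono (by omega) hp)

instance : SetLike.GradedMonoid (lowersTotalDegreeBy σ R) where
  one_mem _ _ hp := hp
  mul_mem s t _ _ hf hg n p hp := hf n _ (hg (n + s) p (by rwa [add_assoc]))

lemma pderiv_mem_lowersTotalDegreeBy_one (i : σ) :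
    (pderiv i : Derivation R (MvPolynomial σ R) (MvPolynomial σ R)).toLinearMap ∈
      lowersTotalDegreeBy σ R 1 := by
  intro n p hp
  rw [mem_totalDegreeLT] at hp ⊢
  intro m hm
  rw [mem_support_iff, Derivation.coeFn_coe, coeff_pderiv] at hm
  have := hp _ (mem_support_iff.mpr (left_ne_zero_of_mul hm))
  rw [map_add, Finsupp.degree_single] at this
  omega

end TotalDegreeLT

section Intertwining

variable {σ R : Type*} [CommSemiring R]

lemma algHom_pderiv_X (φ : MvPolynomial σ R →ₐ[R] MvPolynomial σ R) (i j : σ) :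
    φ (pderiv i (X j)) = pderiv i (X j) := by
  classical
  rw [pderiv_X]
  rcases eq_or_ne i j with rfl | hij
  · simp
  · simp [hij.symm]

lemma pderiv_mem_scaledCommutant {φ : MvPolynomial σ R →ₐ[R] MvPolynomial σ R} {a : R}
    (h : ∀ i j, pderiv i (φ (X j)) = a • φ (pderiv i (X j))) (i : σ) :
    (pderiv i : Derivation R (MvPolynomial σ R) (MvPolynomial σ R)).toLinearMap ∈
      Module.End.scaledCommutant φ.toLinearMap a 1 := by
  refine LinearMap.ext fun p => ?_
  simp only [Module.End.mul_apply, LinearMap.smul_apply, pow_one, AlgHom.toLinearMap_apply,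
    Derivation.coeFn_coe]
  induction p using MvPolynomial.induction_on with
  | C b => simp
  | add p q hp hq => simp only [map_add, hp, hq, smul_add]
  | mul_X p j hp =>
    simp only [map_mul, Derivation.leibniz, smul_eq_mul, hp, h, map_add, mul_smul_comm, smul_add]

end Intertwining

theorem sum_smul_pow_apply_eq_zero_iff {σ K : Type*} [Field K]
    {A : Module.End K (MvPolynomial σ K)} (hA : A ∈ lowersTotalDegreeBy σ K 1)
    {c : ℕ → K} {k₁ k₂ : ℕ} (hc : c k₁ ≠ 0) (hk : k₁ ≤ k₂) (Q : MvPolynomial σ K) :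
    ∑ k ∈ Finset.Icc k₁ k₂, c k • (A ^ k) Q = 0 ↔ (A ^ k₁) Q = 0 := by
  have hpow : ∀ k, k₁ ≤ k → (A ^ k) Q = (A ^ (k - k₁)) ((A ^ k₁) Q) := fun k hk => by
    rw [← Module.End.mul_apply, ← pow_add, Nat.sub_add_cancel hk]
  refine ⟨fun hsum => ?_, fun hP => Finset.sum_eq_zero fun k hk => ?_⟩
  · by_contra hP
    set P := (A ^ k₁) Q
    have hhigher : ∑ k ∈ Finset.Ioc k₁ k₂, c k • (A ^ k) Q ∈ totalDegreeLT σ K P.totalDegree := by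
      refine Submodule.sum_mem _ fun k hk => Submodule.smul_mem _ _ ?_
      obtain ⟨hk₁, -⟩ := Finset.mem_Ioc.mp hk
      have hlow : A ^ (k - k₁) ∈ lowersTotalDegreeBy σ K 1 :=
        lowersTotalDegreeBy_antitone (by simp; omega) (SetLike.pow_mem_graded _ hA)
      exact hpow k hk₁.le ▸ hlow _ P (mem_totalDegreeLT_totalDegree_add_one P)
    rw [Finset.Icc_eq_cons_Ioc hk, Finset.sum_cons, add_eq_zero_iff_eq_neg] at hsum
    have hlead : c k₁ • P ∈ totalDegreeLT σ K P.totalDegree := hsum ▸ neg_mem hhigher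
    rw [Submodule.smul_mem_iff _ hc, mem_totalDegreeLT_iff_of_ne_zero hP] at hlead
    exact lt_irrefl _ hlead
  · rw [hpow k (Finset.mem_Icc.mp hk).1, hP, map_zero, smul_zero]

end MvPolynomial

section DiffOp

variable {d : ℕ}

noncomputable def diffOp (W : MvPolynomial (Fin d) ℂ) : Module.End ℂ (MvPolynomial (Fin d) ℂ) :=
  (AddMonoidAlgebra.coeff W).sum fun α c => (c * (-Complex.I) ^ (α.sum fun _ n => n)) • Dmulti α

lemma iterate_applyOp (W : MvPolynomial (Fin d) ℂ) (k : ℕ) :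
    (fun q => applyOp W q)^[k] = ⇑(diffOp W ^ k) := by
  rw [Module.End.coe_pow]
  congr 1
  funext Q
  simp only [diffOp, LinearMap.finsupp_sum_apply]
  rfl

variable {A : ℕ → Submodule ℂ (Module.End ℂ (MvPolynomial (Fin d) ℂ))} [SetLike.GradedMonoid A]

lemma Dmulti_mem_of_pderiv_mem
    (h : ∀ j, (pderiv j : Derivation ℂ (MvPolynomial (Fin d) ℂ) _).toLinearMap ∈ A 1)
    (α : Fin d →₀ ℕ) : Dmulti α ∈ A α.degree := by
  have := SetLike.list_prod_map_mem_graded (List.finRange d) α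
    (fun j => (pderiv j : Derivation ℂ (MvPolynomial (Fin d) ℂ) _).toLinearMap ^ α j)
    fun j _ => by simpa using SetLike.pow_mem_graded (α j) (h j)
  rwa [← List.ofFn_eq_map, ← List.ofFn_eq_map, List.sum_ofFn, ← Finsupp.degree_eq_sum] at this

lemma diffOp_mem_of_pderiv_mem {r : ℕ} {W : MvPolynomial (Fin d) ℂ} (hW : W.IsHomogeneous r)
    (h : ∀ j, (pderiv j : Derivation ℂ (MvPolynomial (Fin d) ℂ) _).toLinearMap ∈ A 1) :
    diffOp W ∈ A r :=
  Submodule.sum_mem _ fun α hα => Submodule.smul_mem _ _ <|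
    (hW.degree_eq_sum_deg_support hα).symm ▸ Dmulti_mem_of_pderiv_mem h α

end DiffOp

section Invariance

variable {d r : ℕ} {W : MvPolynomial (Fin d) ℂ}

lemma diffOp_pow_apply_algHom (hW : W.IsHomogeneous r)
    {φ : MvPolynomial (Fin d) ℂ →ₐ[ℂ] MvPolynomial (Fin d) ℂ} {a : ℂ}
    (hφ : ∀ i j, pderiv i (φ (X j)) = a • φ (pderiv i (X j))) (k : ℕ) (Q : MvPolynomial (Fin d) ℂ) :
    (diffOp W ^ k) (φ Q) = a ^ (k * r) • φ ((diffOp W ^ k) Q) :=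
  LinearMap.congr_fun (SetLike.pow_mem_graded k
    (diffOp_mem_of_pderiv_mem hW (pderiv_mem_scaledCommutant hφ))) Q

lemma diffOp_pow_shiftPoly (hW : W.IsHomogeneous r) (k : ℕ) (h : Fin d → ℝ)
    (Q : MvPolynomial (Fin d) ℂ) :
    (diffOp W ^ k) (shiftPoly Q h) = shiftPoly ((diffOp W ^ k) Q) h := by
  have := diffOp_pow_apply_algHom hW (φ := aeval fun j => X j + C (h j : ℂ)) (a := 1)
    (fun i j => by rw [aeval_X, algHom_pderiv_X, one_smul, map_add, pderiv_C, add_zero]) k Q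
  rwa [one_pow, one_smul] at this

lemma diffOp_pow_scalePoly (hW : W.IsHomogeneous r) (k : ℕ) (lam : ℝ)
    (Q : MvPolynomial (Fin d) ℂ) :
    (diffOp W ^ k) (scalePoly Q lam) = (lam : ℂ) ^ (k * r) • scalePoly ((diffOp W ^ k) Q) lam :=
  diffOp_pow_apply_algHom hW (fun i j => by rw [aeval_X, algHom_pderiv_X, pderiv_C_mul, C_mul']) k Q

end Invariance

theorem nullspace_of_sum_of_powers_general
    (d r k₁ k₂ : ℕ) (hk : k₁ < k₂)
    (C' : ℕ → ℝ) (hC : C' k₁ ≠ 0)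
    (W : MvPolynomial (Fin d) ℂ) (hW : W.IsHomogeneous r) (hr : 0 < r) :
    (∀ Q : MvPolynomial (Fin d) ℂ,
      (∑ k ∈ Finset.Icc k₁ k₂, (C' k : ℂ) • (fun q => applyOp W q)^[k] Q) = 0 ↔
        (fun q => applyOp W q)^[k₁] Q = 0) ∧
    (∀ Q : MvPolynomial (Fin d) ℂ,
      (∑ k ∈ Finset.Icc k₁ k₂, (C' k : ℂ) • (fun q => applyOp W q)^[k] Q) = 0 →
      (∀ h : Fin d → ℝ,
        (∑ k ∈ Finset.Icc k₁ k₂, (C' k : ℂ) • (fun q => applyOp W q)^[k] (shiftPoly Q h)) = 0) ∧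
      (∀ lam : ℝ, lam ≠ 0 →
        (∑ k ∈ Finset.Icc k₁ k₂, (C' k : ℂ) • (fun q => applyOp W q)^[k] (scalePoly Q lam)) = 0)) := by
  simp only [iterate_applyOp]
  have hA : diffOp W ∈ lowersTotalDegreeBy (Fin d) ℂ 1 := lowersTotalDegreeBy_antitone hr
    (diffOp_mem_of_pderiv_mem hW pderiv_mem_lowersTotalDegreeBy_one)
  have hker := sum_smul_pow_apply_eq_zero_iff hA (c := fun k => (C' k : ℂ))
    (Complex.ofReal_ne_zero.mpr hC) hk.le
  refine ⟨hker, fun Q hQ => ⟨fun h => ?_, fun lam _ => ?_⟩⟩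
  · rw [hker, diffOp_pow_shiftPoly hW, (hker Q).mp hQ, shiftPoly, map_zero]
  · rw [hker, diffOp_pow_scalePoly hW, (hker Q).mp hQ, scalePoly, map_zero, smul_zero]

/-- Let `C_{k₁},…,C_{k₂} ∈ ℝ` with `C_{k₁} ≠ 0`, `1 ≤ k₁ < k₂`, and
`W` a nonconstant homogeneous polynomial. Then a polynomial `Q` satisfies
`(Σ_{k=k₁}^{k₂} C_k W(−iD)^k) Q = 0` iff `W(−iD)^{k₁} Q = 0`; in particular the
polynomial null-space of `Σ_k C_k W(−iD)^k` coincides with that of the lowest-order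
operator `W(−iD)^{k₁}` and is affinely invariant. -/
theorem nullspace_of_sum_of_powers
    (d r k₁ k₂ : ℕ) (hk₁ : 1 ≤ k₁) (hk : k₁ < k₂)
    (C' : ℕ → ℝ) (hC : C' k₁ ≠ 0)
    (W : MvPolynomial (Fin d) ℂ) (hW : W.IsHomogeneous r) (hr : 0 < r) (hW0 : W ≠ 0) :
    (∀ Q : MvPolynomial (Fin d) ℂ,
      (∑ k ∈ Finset.Icc k₁ k₂, (C' k : ℂ) • (fun q => applyOp W q)^[k] Q) = 0 ↔
        (fun q => applyOp W q)^[k₁] Q = 0) ∧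
    (∀ Q : MvPolynomial (Fin d) ℂ,
      (∑ k ∈ Finset.Icc k₁ k₂, (C' k : ℂ) • (fun q => applyOp W q)^[k] Q) = 0 →
      (∀ h : Fin d → ℝ,
        (∑ k ∈ Finset.Icc k₁ k₂, (C' k : ℂ) • (fun q => applyOp W q)^[k] (shiftPoly Q h)) = 0) ∧
      (∀ lam : ℝ, lam ≠ 0 →
        (∑ k ∈ Finset.Icc k₁ k₂, (C' k : ℂ) • (fun q => applyOp W q)^[k] (scalePoly Q lam)) = 0)) :=
  nullspace_of_sum_of_powers_general d r k₁ k₂ hk C' hC W hW hr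
end

section
/- For the matrix A = [[1,−2],[1,0]], the quadratic form W(ξ₁,ξ₂) = 2ξ₁² + ξ₁ξ₂ + ξ₂² is positive definite and satisfies W(A⁻ᵀξ) = (1/2) W(ξ) for all ξ ∈ ℝ², i.e., W is invariant up to the factor 1/|det A| under the inverse-transpose of A. -/
open Matrix

/-- For `A = [[1,−2],[1,0]]`, the quadratic form
`W(ξ₁,ξ₂) = 2ξ₁² + ξ₁ξ₂ + ξ₂²` is positive definite and satisfies
`W(A⁻ᵀξ) = (1/2) W(ξ)` for all `ξ ∈ ℝ²`, i.e. `W` is invariant up to the factor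
`1/|det A|` under the inverse transpose of `A`. -/
theorem quadratic_form_invariance_example :
    let A : Matrix (Fin 2) (Fin 2) ℝ := !![1, -2; 1, 0]
    let W : (Fin 2 → ℝ) → ℝ := fun ξ => 2 * (ξ 0) ^ 2 + ξ 0 * ξ 1 + (ξ 1) ^ 2
    (∀ ξ : Fin 2 → ℝ, ξ ≠ 0 → 0 < W ξ) ∧
    (∀ ξ : Fin 2 → ℝ, W ((A⁻¹)ᵀ.mulVec ξ) = (1 / 2) * W ξ) := by
  intro A W
  constructor
  · intro ξ hξ
    have h : ξ 0 ≠ 0 ∨ ξ 1 ≠ 0 := by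
      by_contra h
      push_neg at h
      apply hξ
      funext i
      fin_cases i <;> simp [h.1, h.2]
    simp only [W]
    rcases h with h | h <;> nlinarith [sq_nonneg (ξ 0 + ξ 1), sq_nonneg (ξ 0 - ξ 1), sq_nonneg (ξ 0), sq_nonneg (ξ 1), pow_pos (abs_pos.mpr h) 2, sq_abs (ξ 0), sq_abs (ξ 1)]
  · intro ξ
    have hinv : A⁻¹ = !![0, 1; -1/2, 1/2] := by
      rw [Matrix.inv_def]
      norm_num [A, Matrix.det_fin_two_of, Matrix.adjugate_fin_two]
    simp only [W, hinv, Matrix.transpose, Matrix.mulVec, dotProduct, Fin.sum_univ_two]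
    simp [Matrix.of_apply]
    ring
end

section
/- Every polynomial in the space V := span{1, y, x + y²} ⊂ ℝ[x,y] is annihilated by the differential operator 2∂_x − ∂_{xx} − ∂_{yy}; moreover V is shift-invariant (closed under (x,y) ↦ (x+h₁, y+h₂)) but not scale-invariant (the polynomial x + y² is in V but its scaling λx + λ²y² for generic λ ≠ 0,1 is not in V). -/
open MvPolynomial

/-- Every polynomial in `V := span{1, y, x + y²} ⊂ ℝ[x,y]` is
annihilated by `2∂_x − ∂_{xx} − ∂_{yy}`; moreover `V` is shift-invariant but not
scale-invariant: `x + y² ∈ V`, but its scaling `λx + λ²y²` is not in `V` for any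
`λ ≠ 0, 1`. -/
theorem span_shift_invariant_not_scale_invariant :
    let x : MvPolynomial (Fin 2) ℝ := X 0
    let y : MvPolynomial (Fin 2) ℝ := X 1
    let V : Submodule ℝ (MvPolynomial (Fin 2) ℝ) :=
      Submodule.span ℝ {1, y, x + y ^ 2}
    (∀ P ∈ V,
      (2 : ℝ) • pderiv (0 : Fin 2) P - pderiv (0 : Fin 2) (pderiv (0 : Fin 2) P)
        - pderiv (1 : Fin 2) (pderiv (1 : Fin 2) P) = 0) ∧
    (∀ P ∈ V, ∀ h : Fin 2 → ℝ,
      aeval (fun j => X j + C (h j)) P ∈ V) ∧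
    (x + y ^ 2 ∈ V ∧ ∀ lam : ℝ, lam ≠ 0 → lam ≠ 1 →
      aeval (fun j => C lam * X j) (x + y ^ 2) ∉ V) := by
  intro x y V
  have hy0 : y = X 1 := rfl
  have hx0 : x = X 0 := rfl
  have hV : V = Submodule.span ℝ {1, X 1, X 0 + X 1 ^ 2} := rfl
  rw [hV, hx0, hy0]
  have pd2 : pderiv (1:Fin 2) (2:MvPolynomial (Fin 2) ℝ) = 0 := by
    rw [← map_ofNat (C : ℝ →+* MvPolynomial (Fin 2) ℝ) 2, pderiv_C]
  set W := Submodule.span ℝ ({1, X 1, X 0 + X 1 ^ 2} : Set (MvPolynomial (Fin 2) ℝ)) with hW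
  have hmem : ∀ (a b c : ℝ),
      a • (1 : MvPolynomial (Fin 2) ℝ) + b • X 1 + c • (X 0 + X 1 ^ 2) ∈ W := by
    intro a b c
    refine Submodule.add_mem _ (Submodule.add_mem _ ?_ ?_) ?_ <;>
      exact Submodule.smul_mem _ _ (Submodule.subset_span (by simp))
  have hset : ({1, X 1, X 0 + X 1 ^ 2} : Set (MvPolynomial (Fin 2) ℝ))
      = Set.range (fun i : Fin 3 => ![1, X 1, X 0 + X 1 ^ 2] i) := by
    ext p
    constructor
    · rintro (rfl | rfl | rfl)
      exacts [⟨0, rfl⟩, ⟨1, rfl⟩, ⟨2, rfl⟩]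
    · rintro ⟨i, rfl⟩; fin_cases i <;> simp
  have hrep : ∀ P ∈ W, ∃ a b c : ℝ,
      P = a • (1 : MvPolynomial (Fin 2) ℝ) + b • X 1 + c • (X 0 + X 1 ^ 2) := by
    intro P hP
    rw [hW, hset, Submodule.mem_span_range_iff_exists_fun] at hP
    obtain ⟨cc, hcc⟩ := hP
    exact ⟨cc 0, cc 1, cc 2, by rw [← hcc]; simp [Fin.sum_univ_three]⟩
  refine ⟨?_, ?_, ?_, ?_⟩
  · intro P hP
    obtain ⟨a, b, c, rfl⟩ := hrep P hP
    simp [smul_eq_C_mul, map_ofNat, pd2]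
    try ring
  · intro P hP h
    obtain ⟨a, b, c, rfl⟩ := hrep P hP
    rw [show (aeval (fun j => X j + C (h j))
          (a • (1 : MvPolynomial (Fin 2) ℝ) + b • X 1 + c • (X 0 + X 1 ^ 2)))
        = (a + b * h 1 + c * (h 0 + h 1 ^ 2)) • (1 : MvPolynomial (Fin 2) ℝ)
          + (b + 2 * c * h 1) • X 1 + c • (X 0 + X 1 ^ 2) by
      simp [smul_eq_C_mul, map_ofNat]
      try ring]
    exact hmem _ _ _
  · simpa using hmem 0 0 1
  · intro lam h0 h1 hmem'
    have hq : aeval (fun j => C lam * X j) ((X 0 : MvPolynomial (Fin 2) ℝ) + X 1 ^ 2)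
        = C lam * X 0 + C (lam ^ 2) * X 1 ^ 2 := by
      simp [mul_pow]
      try ring
    rw [hq] at hmem'
    obtain ⟨a, b, c, hc⟩ := hrep _ hmem'
    have E : ∀ u v : ℝ, lam * u + lam ^ 2 * v ^ 2 = a + b * v + c * (u + v ^ 2) := by
      intro u v
      have := congrArg (eval ![u, v]) hc
      simp [smul_eq_C_mul] at this
      linarith [this]
    have h00 := E 0 0
    have h10 := E 1 0
    have h01 := E 0 1
    have h0m := E 0 (-1)
    have hl : lam * (lam - 1) = 0 := by nlinarith [h00, h10, h01, h0m]
    rcases mul_eq_zero.mp hl with h | h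
    · exact h0 h
    · exact h1 (by linarith)
end
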